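/- arXiv:0904.0837 — 2 statements merged into one kernel-verified Lean document; each statement's English description precedes it below -/
import Mathlib

section
/- Let k ≥ 1, and let a : Fin k → ℤ with a i ≠ 0 for all i, A = ∏ a i, σ i = ∏_{j ≠ i} a j. Let n ≤ k, b : Fin k → ℤ with ∑ b i σ i = 1, δ i = ∑_{j ≠ i} b j ∏_{l ≠ i,j} a l, and integers u i, v i for i < n with a i * u i - σ i * v i ≠ 0. Then, as rational numbers, ∑_{i < n} (b i * u i + δ i * v i)/(a i * u i - σ i * v i) + ∑_{n ≤ i < k} b i / a i = 1/A + ∑_{i < n} v i / (a i * (a i * u i - σ i * v i)). -/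
/-!
Write `σ i = ∏_{j ≠ i} a j` and `δ i = ∑_{j ≠ i} b j ∏_{l ≠ i, j} a l`. Splitting off the
`j = i` term of `∑ b j σ j = 1` gives `a i δ i + b i σ i = 1`, and with this relation each
term `(b i u i + δ i v i) / (a i u i - σ i v i)` equals `b i / a i + v i / (a i (a i u i - σ i v i))`.
What remains is `∑ b i / a i = (∑ b i σ i) / ∏ a i = 1 / ∏ a i`.
-/

open Finset

section

variable {ι R : Type*} [DecidableEq ι] {s : Finset ι} {a b : ι → R} {i : ι}

theorem mul_sum_mul_prod_erase_erase_add [CommSemiring R] (hi : i ∈ s) :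
    a i * ∑ j ∈ s.erase i, b j * ∏ l ∈ (s.erase i).erase j, a l
        + b i * ∏ j ∈ s.erase i, a j
      = ∑ j ∈ s, b j * ∏ l ∈ s.erase j, a l := by
  rw [mul_sum, ← sum_erase_add _ _ hi]
  congr 1
  refine sum_congr rfl fun j hj => ?_
  have hij : i ∈ s.erase j := mem_erase.mpr ⟨(ne_of_mem_erase hj).symm, hi⟩
  rw [erase_right_comm, mul_left_comm, mul_prod_erase _ _ hij]

theorem sum_div_eq_sum_mul_prod_erase_div_prod [Field R] (ha : ∀ i ∈ s, a i ≠ 0) :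
    ∑ i ∈ s, b i / a i = (∑ i ∈ s, b i * ∏ j ∈ s.erase i, a j) / ∏ j ∈ s, a j := by
  rw [sum_div]
  refine sum_congr rfl fun i hi => ?_
  have hσ : ∏ j ∈ s.erase i, a j ≠ 0 := prod_ne_zero_iff.mpr fun j hj => ha j (mem_of_mem_erase hj)
  rw [← mul_prod_erase _ _ hi, mul_div_mul_right _ _ hσ]

end

theorem div_eq_div_add_div_of_mul_add_mul_eq_one {K : Type*} [Field K] {A B C S U V : K}
    (hA : A ≠ 0) (hD : A * U - C * V ≠ 0) (h : A * S + B * C = 1) :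
    (B * U + S * V) / (A * U - C * V) = B / A + V / (A * (A * U - C * V)) := by
  rw [div_add_div _ _ hA (mul_ne_zero hA hD),
    div_eq_div_iff hD (mul_ne_zero hA (mul_ne_zero hA hD))]
  linear_combination (A * (A * U - C * V) * V) * h

theorem seifert_fiber_surface_boundary_identity_general
    (k : ℕ) (a : Fin k → ℤ) (ha : ∀ i, a i ≠ 0)
    (n : ℕ) (b : Fin k → ℤ)
    (hb : ∑ i, b i * ∏ j ∈ Finset.univ.erase i, a j = 1)
    (u v : Fin k → ℤ)
    (huv : ∀ i : Fin k, (i : ℕ) < n →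
      a i * u i - (∏ j ∈ Finset.univ.erase i, a j) * v i ≠ 0) :
    (∑ i ∈ Finset.univ.filter (fun i : Fin k => (i : ℕ) < n),
        ((b i * u i + (∑ j ∈ Finset.univ.erase i,
            b j * ∏ l ∈ (Finset.univ.erase i).erase j, a l) * v i : ℤ) : ℚ)
          / ((a i * u i - (∏ j ∈ Finset.univ.erase i, a j) * v i : ℤ) : ℚ))
      + ∑ i ∈ Finset.univ.filter (fun i : Fin k => n ≤ (i : ℕ)),
          ((b i : ℤ) : ℚ) / ((a i : ℤ) : ℚ)
    = 1 / ((∏ i, a i : ℤ) : ℚ)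
      + ∑ i ∈ Finset.univ.filter (fun i : Fin k => (i : ℕ) < n),
          ((v i : ℤ) : ℚ)
            / ((a i * (a i * u i - (∏ j ∈ Finset.univ.erase i, a j) * v i) : ℤ) : ℚ) := by
  have ha' : ∀ i, (a i : ℚ) ≠ 0 := fun i => Int.cast_ne_zero.mpr (ha i)
  have hb' : ∑ i, (b i : ℚ) * ∏ j ∈ univ.erase i, (a j : ℚ) = 1 := by exact_mod_cast hb
  push_cast
  have hsplit : ∀ i ∈ univ.filter (fun i : Fin k => (i : ℕ) < n),
      ((b i : ℚ) * u i + (∑ j ∈ univ.erase i, (b j : ℚ) * ∏ l ∈ (univ.erase i).erase j, (a l : ℚ))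
          * v i) / (a i * u i - (∏ j ∈ univ.erase i, (a j : ℚ)) * v i)
        = b i / a i + v i / (a i * (a i * u i - (∏ j ∈ univ.erase i, (a j : ℚ)) * v i)) := by
    intro i hi
    refine div_eq_div_add_div_of_mul_add_mul_eq_one (ha' i) ?_ ?_
    · exact_mod_cast huv i (mem_filter.mp hi).2
    · exact (mul_sum_mul_prod_erase_erase_add (mem_univ i)).trans hb'
  rw [sum_congr rfl hsplit, sum_add_distrib, add_right_comm]
  simp only [← not_lt]
  rw [sum_filter_add_sum_filter_not, sum_div_eq_sum_mul_prod_erase_div_prod fun i _ => ha' i, hb']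

theorem seifert_fiber_surface_boundary_identity
    (k : ℕ) (hk : 1 ≤ k) (a : Fin k → ℤ) (ha : ∀ i, a i ≠ 0)
    (n : ℕ) (hn : n ≤ k) (b : Fin k → ℤ)
    (hb : ∑ i, b i * ∏ j ∈ Finset.univ.erase i, a j = 1)
    (u v : Fin k → ℤ)
    (huv : ∀ i : Fin k, (i : ℕ) < n →
      a i * u i - (∏ j ∈ Finset.univ.erase i, a j) * v i ≠ 0) :
    (∑ i ∈ Finset.univ.filter (fun i : Fin k => (i : ℕ) < n),
        ((b i * u i + (∑ j ∈ Finset.univ.erase i,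
            b j * ∏ l ∈ (Finset.univ.erase i).erase j, a l) * v i : ℤ) : ℚ)
          / ((a i * u i - (∏ j ∈ Finset.univ.erase i, a j) * v i : ℤ) : ℚ))
      + ∑ i ∈ Finset.univ.filter (fun i : Fin k => n ≤ (i : ℕ)),
          ((b i : ℤ) : ℚ) / ((a i : ℤ) : ℚ)
    = 1 / ((∏ i, a i : ℤ) : ℚ)
      + ∑ i ∈ Finset.univ.filter (fun i : Fin k => (i : ℕ) < n),
          ((v i : ℤ) : ℚ)
            / ((a i * (a i * u i - (∏ j ∈ Finset.univ.erase i, a j) * v i) : ℤ) : ℚ) :=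
  seifert_fiber_surface_boundary_identity_general k a ha n b hb u v huv
end

section
/- Let k ≥ 1, a : Fin k → ℤ with all a i ≠ 0, A = ∏ a i, σ i = ∏_{j ≠ i} a j, and suppose A < 0. Let 1 ≤ n ≤ k and let u i, v i be integers for i < n satisfying a i * u i - σ i * v i > 0 and a i * v i < 0 for all i < n. Then 1/A + ∑_{i < n} v i / (a i * (a i * u i - σ i * v i)) < 0 as a rational number; in particular this expression is nonzero. -/
theorem div_mul_neg_of_mul_neg_of_pos {K : Type*} [Field K] [LinearOrder K] [IsStrictOrderedRing K]
    {a v d : K} (hav : a * v < 0) (hd : 0 < d) : v / (a * d) < 0 := by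
  have ha : a ≠ 0 := left_ne_zero_of_mul hav.ne
  rw [← mul_div_mul_left v (a * d) ha, ← mul_assoc]
  exact div_neg_of_neg_of_pos hav (mul_pos (mul_self_pos.2 ha) hd)

theorem seifert_negative_component_exists_neg_general
    (k : ℕ) (a : Fin k → ℤ)
    (hA : ∏ i, a i < 0)
    (n : ℕ) (u v : Fin k → ℤ)
    (h1 : ∀ i : Fin k, (i : ℕ) < n →
      0 < a i * u i - (∏ j ∈ Finset.univ.erase i, a j) * v i)
    (h2 : ∀ i : Fin k, (i : ℕ) < n → a i * v i < 0) :
    1 / ((∏ i, a i : ℤ) : ℚ)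
      + ∑ i ∈ Finset.univ.filter (fun i : Fin k => (i : ℕ) < n),
          ((v i : ℤ) : ℚ)
            / ((a i * (a i * u i - (∏ j ∈ Finset.univ.erase i, a j) * v i) : ℤ) : ℚ) < 0 ∧
    (1 / ((∏ i, a i : ℤ) : ℚ)
      + ∑ i ∈ Finset.univ.filter (fun i : Fin k => (i : ℕ) < n),
          ((v i : ℤ) : ℚ)
            / ((a i * (a i * u i - (∏ j ∈ Finset.univ.erase i, a j) * v i) : ℤ) : ℚ)) ≠ 0 := by
  have hsum : ∑ i ∈ Finset.univ.filter (fun i : Fin k => (i : ℕ) < n),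
      ((v i : ℤ) : ℚ)
        / ((a i * (a i * u i - (∏ j ∈ Finset.univ.erase i, a j) * v i) : ℤ) : ℚ) ≤ 0 := by
    refine Finset.sum_nonpos fun i hi => ?_
    have hin := (Finset.mem_filter.1 hi).2
    rw [Int.cast_mul]
    exact (div_mul_neg_of_mul_neg_of_pos (by exact_mod_cast h2 i hin)
      (by exact_mod_cast h1 i hin)).le
  have hA' : ((∏ i, a i : ℤ) : ℚ) < 0 := by exact_mod_cast hA
  have hneg := add_neg_of_neg_of_nonpos (one_div_neg.2 hA') hsum
  exact ⟨hneg, hneg.ne⟩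

theorem seifert_negative_component_exists_neg
    (k : ℕ) (hk : 1 ≤ k) (a : Fin k → ℤ) (ha : ∀ i, a i ≠ 0)
    (hA : ∏ i, a i < 0)
    (n : ℕ) (hn1 : 1 ≤ n) (hn : n ≤ k) (u v : Fin k → ℤ)
    (h1 : ∀ i : Fin k, (i : ℕ) < n →
      0 < a i * u i - (∏ j ∈ Finset.univ.erase i, a j) * v i)
    (h2 : ∀ i : Fin k, (i : ℕ) < n → a i * v i < 0) :
    1 / ((∏ i, a i : ℤ) : ℚ)
      + ∑ i ∈ Finset.univ.filter (fun i : Fin k => (i : ℕ) < n),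
          ((v i : ℤ) : ℚ)
            / ((a i * (a i * u i - (∏ j ∈ Finset.univ.erase i, a j) * v i) : ℤ) : ℚ) < 0 ∧
    (1 / ((∏ i, a i : ℤ) : ℚ)
      + ∑ i ∈ Finset.univ.filter (fun i : Fin k => (i : ℕ) < n),
          ((v i : ℤ) : ℚ)
            / ((a i * (a i * u i - (∏ j ∈ Finset.univ.erase i, a j) * v i) : ℤ) : ℚ)) ≠ 0 :=
  seifert_negative_component_exists_neg_general k a hA n u v h1 h2
end
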